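/- arXiv:2209.11006 — 3 statements merged into one kernel-verified Lean document; each statement's English description precedes it below -/
import Mathlib

section
/- For any one-dimensional set of finite perimeter E ⊆ R and any nonnegative even kernel ρ_ε on R with 2∫_0^∞ t ρ_ε(t) dt = 1, the one-dimensional nonlocal perimeter satisfies P_ε^{1D}(E;R) := 2∬_{E×Eᶜ} ρ_ε(s−t) ds dt ≤ H^0(∂* E). Consequently the one-dimensional deficit F_ε^{1D}(E;R) := H^0(∂*E) − P_ε^{1D}(E;R) is nonnegative. -/
/-!
Substituting `t = s - h`, the double integral becomes `∫ ρ(h) |E \ (E + h)| dh`. Pairing `h`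
with `-h` (ρ is even) turns the integrand into `ρ(h) |E ∆ (E + h)| / 2`, and every point `s` of
`E ∆ (E + h)` lies within `|h|` of a boundary point, since the segment from `s - h` to `s`
crosses `∂E`. Hence `|E ∆ (E + h)| ≤ H⁰(∂E) |h|`, and `∫ ρ(h) |h| dh = 1` by the normalization.
-/

open MeasureTheory ENNReal

open scoped symmDiff

theorem IsPreconnected.inter_frontier_nonempty {X : Type*} [TopologicalSpace X] {S E : Set X}
    (hS : IsPreconnected S) (hSE : (S ∩ E).Nonempty) (hSEc : (S \ E).Nonempty) :
    (S ∩ frontier E).Nonempty := by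
  by_contra! h
  have hcover : S ⊆ interior E ∪ (closure E)ᶜ := fun x hx => by
    by_cases hc : x ∈ closure E
    · exact Or.inl (by_contra fun hi => h.subset ⟨hx, hc, hi⟩)
    · exact Or.inr hc
  have hdisj : Disjoint (interior E) (closure E)ᶜ :=
    Set.disjoint_compl_right_iff_subset.2 (interior_subset.trans subset_closure)
  obtain ⟨a, haS, haE⟩ := hSE
  obtain ⟨b, hbS, hbE⟩ := hSEc
  rcases hS.subset_or_subset isOpen_interior isClosed_closure.isOpen_compl hdisj hcover
    with h | h
  · exact hbE (interior_subset (h hbS))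
  · exact h haS (subset_closure haE)

theorem volume_symmDiff_preimage_sub_le {E : Set ℝ} (hfr : (frontier E).Finite) (h : ℝ) :
    volume (E ∆ ((· - h) ⁻¹' E)) ≤ (frontier E).ncard * ENNReal.ofReal |h| := by
  have hcover : E ∆ ((· - h) ⁻¹' E) ⊆ ⋃ c ∈ hfr.toFinset, Set.uIcc c (c + h) := by
    intro s hs
    obtain ⟨c, hcs, hc⟩ : (Set.uIcc (s - h) s ∩ frontier E).Nonempty := by
      rcases hs with ⟨hsE, hshE⟩ | ⟨hshE, hsE⟩
      · exact isPreconnected_uIcc.inter_frontier_nonempty ⟨s, Set.right_mem_uIcc, hsE⟩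
          ⟨s - h, Set.left_mem_uIcc, hshE⟩
      · exact isPreconnected_uIcc.inter_frontier_nonempty ⟨s - h, Set.left_mem_uIcc, hshE⟩
          ⟨s, Set.right_mem_uIcc, hsE⟩
    refine Set.mem_biUnion (hfr.mem_toFinset.2 hc) ?_
    rw [Set.mem_uIcc] at hcs ⊢
    rcases hcs with ⟨h₁, h₂⟩ | ⟨h₁, h₂⟩
    · exact Or.inl ⟨by linarith, by linarith⟩
    · exact Or.inr ⟨by linarith, by linarith⟩
  calc volume (E ∆ ((· - h) ⁻¹' E))
      ≤ ∑ c ∈ hfr.toFinset, volume (Set.uIcc c (c + h)) :=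
        (measure_mono hcover).trans (measure_biUnion_finset_le _ _)
    _ = (frontier E).ncard * ENNReal.ofReal |h| := by
        simp [Real.volume_interval, Set.ncard_eq_toFinset_card _ hfr]

theorem measure_diff_preimage_sub_add_measure_diff_preimage_add {G : Type*} [AddGroup G]
    [MeasurableSpace G] [MeasurableAdd G] (μ : Measure G) [μ.IsAddRightInvariant] {E : Set G}
    (hE : MeasurableSet E) (h : G) :
    μ (E \ (· - h) ⁻¹' E) + μ (E \ (· + h) ⁻¹' E) = μ (E ∆ ((· - h) ⁻¹' E)) := by
  have hP : MeasurableSet ((· - h) ⁻¹' E) := hE.preimage (MeasurableEquiv.subRight h).measurable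
  have htrans : μ (E \ (· + h) ⁻¹' E) = μ ((· - h) ⁻¹' E \ E) := by
    rw [← measure_preimage_add_right μ h ((· - h) ⁻¹' E \ E)]
    congr 1
    ext s
    simp
  rw [htrans, Set.symmDiff_def, measure_union disjoint_sdiff_sdiff (hP.diff hE)]

theorem setLIntegral_setLIntegral_comp_sub {G : Type*} [AddCommGroup G] [MeasurableSpace G]
    [MeasurableAdd₂ G] [MeasurableNeg G] (μ : Measure G) [SFinite μ] [μ.IsAddLeftInvariant]
    [μ.IsNegInvariant] {ρ : G → ℝ≥0∞} (hρ : Measurable ρ) (A : Set G) {B : Set G}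
    (hB : MeasurableSet B) :
    ∫⁻ s in A, ∫⁻ t in B, ρ (s - t) ∂μ ∂μ = ∫⁻ h, ρ h * μ (A ∩ (· - h) ⁻¹' B) ∂μ := by
  have hinner (s : G) :
      ∫⁻ t in B, ρ (s - t) ∂μ = ∫⁻ h, ρ h * B.indicator 1 (s - h) ∂μ := by
    rw [← lintegral_indicator hB, ← lintegral_sub_left_eq_self _ s]
    congr with h
    by_cases hh : s - h ∈ B <;> simp [hh]
  have hmeas :
      Measurable (Function.uncurry fun s h => ρ h * B.indicator (1 : G → ℝ≥0∞) (s - h)) :=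
    (hρ.comp measurable_snd).mul ((measurable_const.indicator hB).comp measurable_sub)
  simp_rw [hinner]
  rw [lintegral_lintegral_swap hmeas.aemeasurable]
  congr with h
  have hP : MeasurableSet ((· - h) ⁻¹' B) := hB.preimage (measurable_sub_const h)
  have hind : (fun s => B.indicator (1 : G → ℝ≥0∞) (s - h)) = ((· - h) ⁻¹' B).indicator 1 := by
    ext s
    by_cases hs : s - h ∈ B <;> simp [hs]
  rw [lintegral_const_mul _ (f := fun s => B.indicator 1 (s - h))
      ((measurable_const.indicator hB).comp (measurable_sub_const h)), hind,
    lintegral_indicator_one hP, Measure.restrict_apply hP, Set.inter_comm]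

theorem Function.Even.comp_abs {α β : Type*} [AddGroup α] [LinearOrder α] {f : α → β}
    (hf : f.Even) (x : α) : f |x| = f x := by
  rcases abs_choice x with h | h <;> rw [h]
  exact hf x

theorem lintegral_comp_abs (f : ℝ → ℝ≥0∞) : ∫⁻ x, f |x| = 2 * ∫⁻ x in Set.Ioi 0, f x := by
  have hIoi : ∫⁻ x in Set.Ioi 0, f |x| = ∫⁻ x in Set.Ioi 0, f x :=
    setLIntegral_congr_fun measurableSet_Ioi fun x hx => by rw [abs_of_pos hx]
  have hIio : ∫⁻ x in Set.Iio 0, f |x| = ∫⁻ x in Set.Ioi 0, f |x| := by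
    have := (Measure.measurePreserving_neg (volume : Measure ℝ)).setLIntegral_comp_preimage_emb
      (MeasurableEquiv.neg ℝ).measurableEmbedding (fun x => f |x|) (Set.Ioi 0)
    simpa using this
  rw [← setLIntegral_univ, ← Set.Iio_union_Ici, lintegral_union measurableSet_Ici
    (Set.Iio_disjoint_Ici le_rfl), setLIntegral_congr Ioi_ae_eq_Ici.symm, hIio, hIoi, two_mul]

/-- For a one-dimensional set of finite perimeter `E ⊆ ℝ` (finitely many boundary points)
    and an even nonnegative kernel `ρ_ε` with `2∫_0^∞ t ρ_ε(t) dt = 1`, the one-dimensional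
    nonlocal perimeter satisfies `P_ε^{1D}(E;ℝ) = 2∬_{E×Eᶜ} ρ_ε(s-t) ≤ H⁰(∂E)`. -/
theorem oneD_nonlocal_perimeter_le {E : Set ℝ} (hE : MeasurableSet E)
    (hfr : (frontier E).Finite)
    (ρ : ℝ → ℝ≥0∞) (hρmeas : Measurable ρ) (hρeven : ∀ t, ρ (-t) = ρ t)
    (hρnorm : 2 * ∫⁻ t in Set.Ioi (0 : ℝ), ENNReal.ofReal t * ρ t = 1) :
    2 * ∫⁻ s in E, ∫⁻ t in Eᶜ, ρ (s - t) ≤ ((frontier E).ncard : ℝ≥0∞) := by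
  set g : ℝ → ℝ≥0∞ := fun h => volume (E \ (· - h) ⁻¹' E)
  have hdouble : ∫⁻ s in E, ∫⁻ t in Eᶜ, ρ (s - t) = ∫⁻ h, ρ h * g h := by
    simp_rw [setLIntegral_setLIntegral_comp_sub volume hρmeas E hE.compl, Set.preimage_compl,
      ← Set.sdiff_eq, g]
  have hreflect : ∫⁻ h, ρ h * g h = ∫⁻ h, ρ h * g (-h) := by
    conv_lhs => rw [← lintegral_neg_eq_self]
    simp_rw [hρeven]
  have hsymmDiff (h : ℝ) : g h + g (-h) ≤ (frontier E).ncard * ENNReal.ofReal |h| := by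
    simp only [g, sub_neg_eq_add]
    rw [measure_diff_preimage_sub_add_measure_diff_preimage_add volume hE h]
    exact volume_symmDiff_preimage_sub_le hfr h
  have hmoment : ∫⁻ h, ρ h * ENNReal.ofReal |h| = 1 := by
    rw [← hρnorm, ← lintegral_comp_abs fun t => ENNReal.ofReal t * ρ t]
    exact lintegral_congr fun h => by rw [Function.Even.comp_abs hρeven, mul_comm]
  calc 2 * ∫⁻ s in E, ∫⁻ t in Eᶜ, ρ (s - t)
      = (∫⁻ h, ρ h * g h) + ∫⁻ h, ρ h * g (-h) := by rw [two_mul, hdouble, ← hreflect]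
    _ ≤ ∫⁻ h, ρ h * (g h + g (-h)) := by simp_rw [mul_add]; exact le_lintegral_add _ _
    _ ≤ ∫⁻ h, (frontier E).ncard * (ρ h * ENNReal.ofReal |h|) :=
        lintegral_mono fun h => by rw [mul_left_comm]; exact mul_le_mul_right (hsymmDiff h) _
    _ = (frontier E).ncard := by
        rw [lintegral_const_mul' _ _ (natCast_ne_top _), hmoment, mul_one]
end

section
/- Let ρ : R → [0,∞) be even with 2∫_0^∞ tρ(t)dt = 1, let a > 0 and 0 < t_F < a with dist(t_F, {0,a}) ≥ δ for some δ > 0, and let F = (0, t_F) ⊆ (0,a). Then the one-dimensional energy deficit satisfies F^{1D}(F;(0,a)) := 1 − 2∫_0^{t_F}∫_{t_F}^a ρ(s−t) ds dt ≤ 4∫_δ^∞ (t−δ) ρ(t) dt. -/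
open MeasureTheory ENNReal Set

/-!
Substituting `s = t + u` turns the double integral into `∫ ρ(u) V(u) du`, where `V(u)` is the
length of `{t ∈ (0, t_F) : t + u ∈ (t_F, a)}`. Since `t_F` is at distance at least `δ` from both
ends of `(0, a)`, one checks `u⁺ ≤ 2 (u - δ)⁺ + V(u)` for every `u`; integrating this against
`ρ` and using the normalization `2 ∫ u⁺ ρ(u) du = 1` gives the bound.
-/

section Translation

variable {G : Type*} [MeasurableSpace G] [AddGroup G] [MeasurableAdd₂ G]
  (μ : Measure G) [SFinite μ] [μ.IsAddRightInvariant]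

theorem setLIntegral_setLIntegral_sub_eq_lintegral_mul {f : G → ℝ≥0∞} (hf : Measurable f)
    (A : Set G) {B : Set G} (hB : MeasurableSet B) :
    ∫⁻ t in A, ∫⁻ s in B, f (s - t) ∂μ ∂μ = ∫⁻ u, f u * μ (A ∩ (u + ·) ⁻¹' B) ∂μ := by
  have inner (t : G) : ∫⁻ s in B, f (s - t) ∂μ = ∫⁻ u, B.indicator 1 (u + t) * f u ∂μ := by
    rw [← lintegral_indicator hB, ← lintegral_add_right_eq_self _ t]
    congr with u
    by_cases hu : u + t ∈ B <;> simp [hu]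
  have hpre (u : G) : MeasurableSet ((u + ·) ⁻¹' B) := measurable_const_add u hB
  simp_rw [inner]
  rw [lintegral_lintegral_swap]
  · congr with u
    have indicator_translate (t : G) :
        B.indicator 1 (u + t) = ((u + ·) ⁻¹' B).indicator (1 : G → ℝ≥0∞) t := rfl
    simp_rw [indicator_translate]
    rw [lintegral_mul_const _ (measurable_one.indicator (hpre u)), lintegral_indicator_one (hpre u),
      Measure.restrict_apply (hpre u), mul_comm, inter_comm]
  · exact (((measurable_one.indicator hB).comp (measurable_snd.add measurable_fst)).mul
      (hf.comp measurable_snd)).aemeasurable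

end Translation

theorem setLIntegral_Ioi_ofReal_sub_mul_eq_lintegral (c : ℝ) (g : ℝ → ℝ≥0∞) :
    ∫⁻ t in Ioi c, ENNReal.ofReal (t - c) * g t = ∫⁻ t, ENNReal.ofReal (t - c) * g t := by
  refine setLIntegral_eq_of_support_subset fun t ht => ?_
  by_contra hct
  exact ht (by simp [ENNReal.ofReal_of_nonpos (sub_nonpos.2 (not_lt.1 hct))])

theorem ofReal_le_two_mul_ofReal_sub_add_volume {δ tF a : ℝ} (hδtF : δ ≤ tF) (hδa : δ ≤ a - tF)
    (u : ℝ) :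
    ENNReal.ofReal u ≤ 2 * ENNReal.ofReal (u - δ) + volume (Ioo 0 tF ∩ Ioo (tF - u) (a - u)) := by
  have key : u ≤ 2 * max (u - δ) 0 + max (min tF (a - u) - max 0 (tF - u)) 0 := by
    simp only [min_def, max_def]
    split_ifs <;> linarith
  calc ENNReal.ofReal u
      ≤ ENNReal.ofReal (2 * max (u - δ) 0) +
          ENNReal.ofReal (max (min tF (a - u) - max 0 (tF - u)) 0) :=
        (ENNReal.ofReal_le_ofReal key).trans ENNReal.ofReal_add_le
    _ = 2 * ENNReal.ofReal (u - δ) + volume (Ioo 0 tF ∩ Ioo (tF - u) (a - u)) := by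
        rw [ENNReal.ofReal_mul zero_le_two, Ioo_inter_Ioo, Real.volume_Ioo]
        simp

theorem oneD_deficit_far_from_boundary_general
    (ρ : ℝ → ℝ≥0∞) (hρmeas : Measurable ρ)
    (hρnorm : 2 * ∫⁻ t in Set.Ioi (0 : ℝ), ENNReal.ofReal t * ρ t = 1)
    (a tF δ : ℝ) (hδ1 : δ ≤ tF) (hδ2 : δ ≤ a - tF) :
    1 - 2 * ∫⁻ t in Set.Ioo (0 : ℝ) tF, ∫⁻ s in Set.Ioo tF a, ρ (s - t) ≤
      4 * ∫⁻ t in Set.Ioi δ, ENNReal.ofReal (t - δ) * ρ t := by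
  have hnorm : 2 * ∫⁻ t, ENNReal.ofReal t * ρ t = 1 := by
    have h0 := setLIntegral_Ioi_ofReal_sub_mul_eq_lintegral 0 ρ
    simp_rw [sub_zero] at h0
    rwa [h0] at hρnorm
  rw [setLIntegral_setLIntegral_sub_eq_lintegral_mul volume hρmeas _ measurableSet_Ioo,
    setLIntegral_Ioi_ofReal_sub_mul_eq_lintegral, tsub_le_iff_right, ← hnorm]
  simp_rw [preimage_const_add_Ioo]
  calc 2 * ∫⁻ t, ENNReal.ofReal t * ρ t
      = ∫⁻ t, 2 * ENNReal.ofReal t * ρ t := by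
        simp_rw [mul_assoc]
        exact (lintegral_const_mul' _ _ ofNat_ne_top).symm
    _ ≤ ∫⁻ t, 4 * (ENNReal.ofReal (t - δ) * ρ t) +
          2 * (ρ t * volume (Ioo 0 tF ∩ Ioo (tF - t) (a - t))) := by
        refine lintegral_mono fun t => ?_
        calc 2 * ENNReal.ofReal t * ρ t
            ≤ 2 * (2 * ENNReal.ofReal (t - δ) + volume (Ioo 0 tF ∩ Ioo (tF - t) (a - t)))
                * ρ t := by
              gcongr
              exact ofReal_le_two_mul_ofReal_sub_add_volume hδ1 hδ2 t
          _ = _ := by ring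
    _ = (4 * ∫⁻ t, ENNReal.ofReal (t - δ) * ρ t) +
          2 * ∫⁻ t, ρ t * volume (Ioo 0 tF ∩ Ioo (tF - t) (a - t)) := by
        rw [lintegral_add_left (by fun_prop), lintegral_const_mul' 4 _ (by norm_num),
          lintegral_const_mul' 2 _ ofNat_ne_top]

/-- For an even normalized kernel `ρ` and `F = (0,t_F) ⊆ (0,a)` with
    `dist(t_F, {0,a}) ≥ δ`, the one-dimensional energy deficit satisfies
    `1 - 2∫_0^{t_F}∫_{t_F}^a ρ(s-t) ds dt ≤ 4∫_δ^∞ (t-δ) ρ(t) dt`. -/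
theorem oneD_deficit_far_from_boundary
    (ρ : ℝ → ℝ≥0∞) (hρmeas : Measurable ρ) (hρeven : ∀ t, ρ (-t) = ρ t)
    (hρnorm : 2 * ∫⁻ t in Set.Ioi (0 : ℝ), ENNReal.ofReal t * ρ t = 1)
    (a tF δ : ℝ) (ha : 0 < a) (htF0 : 0 < tF) (htFa : tF < a)
    (hδ : 0 < δ) (hδ1 : δ ≤ tF) (hδ2 : δ ≤ a - tF) :
    1 - 2 * ∫⁻ t in Set.Ioo (0 : ℝ) tF, ∫⁻ s in Set.Ioo tF a, ρ (s - t) ≤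
      4 * ∫⁻ t in Set.Ioi δ, ENNReal.ofReal (t - δ) * ρ t :=
  oneD_deficit_far_from_boundary_general ρ hρmeas hρnorm a tF δ hδ1 hδ2
end

section
/- In the plane, for any segment I and any σ ∈ S^1, if Sσ denotes the reflection (σ_1,σ_2) ↦ (−σ_1,σ_2), and I_t := [−t,t]×{0} is a horizontal segment whose endpoints' first coordinates are ±t, while I joins a point of {t}×R to a point of {−t}×R, then H^1(π_{σ^⊥}(I)) + H^1(π_{(Sσ)^⊥}(I)) ≥ H^1(π_{σ^⊥}(I_t)) + H^1(π_{(Sσ)^⊥}(I_t)), where π_V is orthogonal projection onto the line V. -/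
open MeasureTheory ENNReal Metric
open scoped RealInnerProductSpace

/-- The reflection `(σ₁, σ₂) ↦ (-σ₁, σ₂)` in the plane. -/
noncomputable def reflFirst (v : EuclideanSpace ℝ (Fin 2)) : EuclideanSpace ℝ (Fin 2) :=
  (WithLp.equiv 2 (Fin 2 → ℝ)).symm ![-(v 0), v 1]

/-- Orthogonal projection onto the line `σ^⊥`, for a unit vector `σ`. -/
noncomputable def projOrth (σ x : EuclideanSpace ℝ (Fin 2)) : EuclideanSpace ℝ (Fin 2) :=
  x - ⟪x, σ⟫ • σ

/-!
The projection of a segment with direction `d` onto `σ^⊥` has length `|d₁σ₂ - d₂σ₁|`. Both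
projections of `I_t` therefore have length `2|tσ₂|`, while for `p - q = (2t, u)` they have lengths
`|2tσ₂ - uσ₁|` and `|2tσ₂ + uσ₁|`, whose sum is at least `4|tσ₂|` by the triangle inequality.
-/

theorem LinearMap.hausdorffMeasure_image_segment {E F : Type*}
    [NormedAddCommGroup E] [NormedSpace ℝ E]
    [NormedAddCommGroup F] [NormedSpace ℝ F] [MeasurableSpace F] [BorelSpace F]
    (f : E →ₗ[ℝ] F) (p q : E) :
    μH[1] (f '' segment ℝ p q) = ENNReal.ofReal ‖f (p - q)‖ := by
  rw [← f.coe_toAffineMap, image_segment, hausdorffMeasure_segment, edist_dist, dist_eq_norm,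
    f.coe_toAffineMap, map_sub]

noncomputable def projOrthₗ (σ : EuclideanSpace ℝ (Fin 2)) :
    EuclideanSpace ℝ (Fin 2) →ₗ[ℝ] EuclideanSpace ℝ (Fin 2) where
  toFun := projOrth σ
  map_add' x y := by
    simp only [projOrth, inner_add_left, add_smul]
    abel
  map_smul' c x := by
    simp only [projOrth, real_inner_smul_left, RingHom.id_apply, smul_sub, smul_smul]

theorem hausdorffMeasure_projOrth_image_segment (σ p q : EuclideanSpace ℝ (Fin 2)) :
    μH[1] (projOrth σ '' segment ℝ p q) = ENNReal.ofReal ‖projOrth σ (p - q)‖ :=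
  (projOrthₗ σ).hausdorffMeasure_image_segment p q

theorem EuclideanSpace.inner_fin_two (x y : EuclideanSpace ℝ (Fin 2)) :
    ⟪x, y⟫ = x 0 * y 0 + x 1 * y 1 := by
  simp [PiLp.inner_apply, Fin.sum_univ_two, mul_comm]

theorem EuclideanSpace.norm_sq_fin_two (x : EuclideanSpace ℝ (Fin 2)) :
    ‖x‖ ^ 2 = x 0 ^ 2 + x 1 ^ 2 := by
  rw [← real_inner_self_eq_norm_sq, EuclideanSpace.inner_fin_two]
  ring

theorem norm_projOrth {σ : EuclideanSpace ℝ (Fin 2)} (hσ : ‖σ‖ = 1)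
    (x : EuclideanSpace ℝ (Fin 2)) :
    ‖projOrth σ x‖ = |x 0 * σ 1 - x 1 * σ 0| := by
  have hσ' : σ 0 ^ 2 + σ 1 ^ 2 = 1 := by rw [← EuclideanSpace.norm_sq_fin_two, hσ, one_pow]
  rw [← Real.sqrt_sq_eq_abs, ← Real.sqrt_sq (norm_nonneg _), EuclideanSpace.norm_sq_fin_two]
  congr 1
  simp only [projOrth, PiLp.sub_apply, PiLp.smul_apply, smul_eq_mul, EuclideanSpace.inner_fin_two]
  linear_combination ((x 0 * σ 0 + x 1 * σ 1) ^ 2 - x 0 ^ 2 - x 1 ^ 2) * hσ'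

@[simp] theorem reflFirst_apply_zero (v : EuclideanSpace ℝ (Fin 2)) : reflFirst v 0 = -v 0 := by
  simp [reflFirst]

@[simp] theorem reflFirst_apply_one (v : EuclideanSpace ℝ (Fin 2)) : reflFirst v 1 = v 1 := by
  simp [reflFirst]

theorem norm_reflFirst (v : EuclideanSpace ℝ (Fin 2)) : ‖reflFirst v‖ = ‖v‖ := by
  rw [← sq_eq_sq₀ (norm_nonneg _) (norm_nonneg _), EuclideanSpace.norm_sq_fin_two,
    EuclideanSpace.norm_sq_fin_two, reflFirst_apply_zero, reflFirst_apply_one, neg_sq]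

theorem two_mul_abs_le_abs_sub_add_abs_add (x y : ℝ) : 2 * |x| ≤ |x - y| + |x + y| := by
  calc 2 * |x| = |(x - y) + (x + y)| := by rw [← abs_two, ← abs_mul]; ring_nf
    _ ≤ |x - y| + |x + y| := abs_add_le _ _

theorem segment_shadow_inequality_general (t : ℝ)
    (σ : EuclideanSpace ℝ (Fin 2)) (hσ : σ ∈ sphere (0 : EuclideanSpace ℝ (Fin 2)) 1)
    (p q : EuclideanSpace ℝ (Fin 2)) (hp : p 0 = t) (hq : q 0 = -t) :
    μH[(1 : ℝ)] (projOrth σ ''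
        segment ℝ ((WithLp.equiv 2 (Fin 2 → ℝ)).symm ![-t, 0])
          ((WithLp.equiv 2 (Fin 2 → ℝ)).symm ![t, 0])) +
      μH[(1 : ℝ)] (projOrth (reflFirst σ) ''
        segment ℝ ((WithLp.equiv 2 (Fin 2 → ℝ)).symm ![-t, 0])
          ((WithLp.equiv 2 (Fin 2 → ℝ)).symm ![t, 0])) ≤
    μH[(1 : ℝ)] (projOrth σ '' segment ℝ p q) +
      μH[(1 : ℝ)] (projOrth (reflFirst σ) '' segment ℝ p q) := by
  have hσ₁ : ‖σ‖ = 1 := mem_sphere_zero_iff_norm.mp hσ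
  have hSσ₁ : ‖reflFirst σ‖ = 1 := (norm_reflFirst σ).trans hσ₁
  simp only [hausdorffMeasure_projOrth_image_segment, norm_projOrth hσ₁, norm_projOrth hSσ₁,
    ← ENNReal.ofReal_add (abs_nonneg _) (abs_nonneg _)]
  refine ENNReal.ofReal_le_ofReal ?_
  have triangle := two_mul_abs_le_abs_sub_add_abs_add (2 * t * σ 1) ((p 1 - q 1) * σ 0)
  simp only [WithLp.equiv_symm_apply, PiLp.sub_apply, Matrix.cons_val_zero, Matrix.cons_val_one,
    Matrix.cons_val_fin_one, sub_self, zero_mul, sub_zero, abs_mul, reflFirst_apply_one,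
    reflFirst_apply_zero, mul_neg, neg_zero, hp, hq, sub_neg_eq_add]
  rw [show -t - t = -(2 * t) by ring, show t + t = 2 * t by ring, abs_neg, ← abs_mul]
  linarith

/-- Shadow inequality for segments in the plane: if `I` joins `{t}×ℝ` to `{-t}×ℝ` then the sum
    of the lengths of the projections of `I` onto `σ^⊥` and `(Sσ)^⊥` is at least the
    corresponding quantity for the horizontal segment `I_t = [-t,t]×{0}`. -/
theorem segment_shadow_inequality (t : ℝ) (ht : 0 < t)
    (σ : EuclideanSpace ℝ (Fin 2)) (hσ : σ ∈ sphere (0 : EuclideanSpace ℝ (Fin 2)) 1)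
    (p q : EuclideanSpace ℝ (Fin 2)) (hp : p 0 = t) (hq : q 0 = -t) :
    μH[(1 : ℝ)] (projOrth σ ''
        segment ℝ ((WithLp.equiv 2 (Fin 2 → ℝ)).symm ![-t, 0])
          ((WithLp.equiv 2 (Fin 2 → ℝ)).symm ![t, 0])) +
      μH[(1 : ℝ)] (projOrth (reflFirst σ) ''
        segment ℝ ((WithLp.equiv 2 (Fin 2 → ℝ)).symm ![-t, 0])
          ((WithLp.equiv 2 (Fin 2 → ℝ)).symm ![t, 0])) ≤
    μH[(1 : ℝ)] (projOrth σ '' segment ℝ p q) +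
      μH[(1 : ℝ)] (projOrth (reflFirst σ) '' segment ℝ p q) :=
  segment_shadow_inequality_general t σ hσ p q hp hq
end
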